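/- For any two ordered rooted binary trees S and T with n internal nodes each (and the same leaf set), the rotation distance d_R(S,T) is at most 2n - 2. -/

import Mathlib

inductive BT : Type
  | leaf : BT
  | node : BT → BT → BT
deriving DecidableEq

namespace BT

/-- number of internal nodes -/
def size : BT → ℕ
  | leaf => 0
  | node l r => size l + size r + 1

/-- number of leaves -/
def nl (t : BT) : ℕ := size t + 1

/-- one (right) rotation somewhere in the tree -/
inductive Rot : BT → BT → Prop
  | root (a b c : BT) : Rot (node (node a b) c) (node a (node b c))
  | congrL {l l' : BT} (r : BT) : Rot l l' → Rot (node l r) (node l' r)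
  | congrR (l : BT) {r r' : BT} : Rot r r' → Rot (node l r) (node l r')

/-- a rotation move: a right rotation or its inverse (a left rotation) -/
def Move (s t : BT) : Prop := Rot s t ∨ Rot t s

/-- `Chain n s t`: `s` is transformed into `t` by `n` rotation moves -/
inductive Chain : ℕ → BT → BT → Prop
  | refl (t : BT) : Chain 0 t t
  | step {n : ℕ} {s u t : BT} : Move s u → Chain n u t → Chain (n + 1) s t

/-- rotation distance -/
noncomputable def dR (s t : BT) : ℕ := sInf {n | Chain n s t}

def isNode : BT → Bool
  | leaf => false
  | node _ _ => true

/-- the multiset of leaf partitions induced by internal edges, where the leaves of the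
tree are numbered from `k` on, left to right; each internal edge is recorded by the
set of leaf numbers below it. -/
def iparts : BT → ℕ → Multiset (Finset ℕ)
  | leaf, _ => 0
  | node l r, k =>
      ((if isNode l then {Finset.Ico k (k + nl l)} else 0) + iparts l k)
        + ((if isNode r then {Finset.Ico (k + nl l) (k + nl l + nl r)} else 0)
            + iparts r (k + nl l))

/-- number of common edge pairs -/
def commonEdges (s t : BT) : ℕ := ((iparts s 0) ∩ (iparts t 0)).card

/-!
Every tree with `n ≥ 1` internal nodes can be rotated into the right comb in at most `n - 1`
rotations, so going from `S` to the comb and back out to `T` takes at most `2n - 2`. To reach the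
comb, rotate at the root until the left subtree is a leaf, then recurse into the right subtree.
Every such rotation lengthens the right arm of the whole tree by one, and the comb's right arm has
length `n`, so exactly `n - rightArmLength t` rotations are used; a nonleaf tree has
`rightArmLength t ≥ 1`.
-/

def comb : ℕ → BT
  | 0 => leaf
  | n + 1 => node leaf (comb n)

def leftArmLength : BT → ℕ
  | leaf => 0
  | node l _ => leftArmLength l + 1

def rightArmLength : BT → ℕ
  | leaf => 0
  | node _ r => rightArmLength r + 1

theorem Move.symm {s t : BT} (h : Move s t) : Move t s := Or.symm h

namespace Chain

theorem trans {a b : ℕ} {s u t : BT} (hsu : Chain a s u) (hut : Chain b u t) :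
    Chain (a + b) s t := by
  induction hsu with
  | refl => simpa using hut
  | step m _ ih => simpa [Nat.add_right_comm] using step m (ih hut)

theorem snoc {n : ℕ} {s u t : BT} (h : Chain n s u) (m : Move u t) : Chain (n + 1) s t := by
  simpa using h.trans (step m (refl t))

theorem symm {n : ℕ} {s t : BT} (h : Chain n s t) : Chain n t s := by
  induction h with
  | refl => exact refl _
  | step m _ ih => exact ih.snoc m.symm

theorem congrR {n : ℕ} (l : BT) {r r' : BT} (h : Chain n r r') :
    Chain n (node l r) (node l r') := by
  induction h with
  | refl => exact refl _
  | step m _ ih => exact step (m.imp (Rot.congrR l) (Rot.congrR l)) ih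

end Chain

theorem exists_chain_node_leaf (l r : BT) : ∃ u, Chain (leftArmLength l) (node l r) (node leaf u) ∧
    u.size = l.size + r.size ∧ rightArmLength u = leftArmLength l + rightArmLength r := by
  induction l generalizing r with
  | leaf => exact ⟨r, Chain.refl _, by simp [size], by simp [leftArmLength]⟩
  | node a b iha _ =>
    obtain ⟨u, hchain, hsize, harm⟩ := iha (node b r)
    refine ⟨u, Chain.step (Or.inl (Rot.root a b r)) hchain, ?_, ?_⟩
    · simp only [size] at hsize ⊢; omega
    · simp only [leftArmLength, rightArmLength] at harm ⊢; omega

theorem exists_chain_comb (t : BT) :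
    ∃ k, Chain k t (comb t.size) ∧ k + rightArmLength t ≤ t.size := by
  match t with
  | leaf => exact ⟨0, Chain.refl _, le_rfl⟩
  | node l r =>
    obtain ⟨u, hpour, hsize, harm⟩ := exists_chain_node_leaf l r
    have hlt : u.size < (node l r).size := by simp only [size]; omega
    obtain ⟨k, hcomb, hk⟩ := exists_chain_comb u
    have hnode : (node l r).size = u.size + 1 := by simp only [size]; omega
    refine ⟨leftArmLength l + k, ?_, ?_⟩
    · rw [hnode]
      exact hpour.trans (hcomb.congrR leaf)
    · simp only [rightArmLength] at hk ⊢; omega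
termination_by t.size

theorem exists_chain_comb_le_size_sub_one (t : BT) :
    ∃ k, Chain k t (comb t.size) ∧ k ≤ t.size - 1 := by
  obtain ⟨k, hchain, hk⟩ := exists_chain_comb t
  refine ⟨k, hchain, ?_⟩
  cases t with
  | leaf => simp only [size] at hk ⊢; omega
  | node l r => simp only [rightArmLength] at hk; omega

theorem culik_wood_bound (n : ℕ) (S T : BT) (hS : S.size = n) (hT : T.size = n) :
    ∃ k, Chain k S T ∧ k ≤ 2 * n - 2 := by
  obtain ⟨k₁, hS_comb, hk₁⟩ := exists_chain_comb_le_size_sub_one S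
  obtain ⟨k₂, hT_comb, hk₂⟩ := exists_chain_comb_le_size_sub_one T
  rw [hS] at hS_comb hk₁
  rw [hT] at hT_comb hk₂
  exact ⟨k₁ + k₂, hS_comb.trans hT_comb.symm, by omega⟩

end BT
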